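/- For any prime p with p ≡ 1 (mod 6), the sum ∑_{k=0}^{(p-1)/6} 1/(3k+1) ≡ -(2/3) q_2 + 2 (mod p), where q_2 = (2^{p-1}-1)/p. -/

import Mathlib

/-- The `n`-th harmonic number as a rational. -/
def H (n : ℕ) : ℚ := ∑ i ∈ Finset.range n, (1 : ℚ) / (i + 1)

/-- Congruence of rationals modulo `m`: the difference is `m` times a rational
whose denominator is not divisible by `m`'s prime. -/
def ratCongr (m : ℕ) (x y : ℚ) : Prop :=
  ∃ r : ℚ, ¬ ((m : ℤ) ∣ (r.den : ℤ)) ∧ x - y = (m : ℚ) * r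

/-!
Write `p = 6h + 1` and work in `ZMod p` with the harmonic sums `H n = ∑_{i ≤ n} 1/i`.
The reflection `j ↦ p - j` turns a sum of `1/j` over `j ≡ 1 (mod d)` into `-1/d` times a block of
harmonic sums; with `d = 3` and `d = 2` this gives `∑_{k < h} 1/(3k+1) = H(3h)/3`. Expanding
`2^p = (1+1)^p` and using `C(p, k)/p ≡ (-1)^(k-1)/k` gives Eisenstein's `H((p-1)/2) ≡ -2 q₂`,
and the last term is `1/(3h+1) ≡ 2` because `2(3h+1) = p + 1`. The congruence in `ℚ` follows
since reduction modulo `p` is additive and multiplicative on rationals with denominator prime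
to `p`.
-/

open Finset

def fermatQuotient (a p : ℕ) : ℕ := (a ^ (p - 1) - 1) / p

theorem sum_range_two_mul {M : Type*} [AddCommMonoid M] (f : ℕ → M) (n : ℕ) :
    ∑ i ∈ range (2 * n), f i = ∑ i ∈ range n, f (2 * i) + ∑ i ∈ range n, f (2 * i + 1) := by
  induction n with
  | zero => simp
  | succ n ih =>
    rw [Nat.mul_succ, sum_range_succ, sum_range_succ, ih, sum_range_succ, sum_range_succ]
    abel

def harmonicMod (p n : ℕ) : ZMod p := ∑ i ∈ range n, ((i + 1 : ℕ) : ZMod p)⁻¹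

section HarmonicMod

variable {p : ℕ} [Fact p.Prime]

theorem natCast_ne_zero_of_lt {n : ℕ} (h0 : 0 < n) (hn : n < p) : (n : ZMod p) ≠ 0 := by
  rw [Ne, ZMod.natCast_eq_zero_iff]
  exact Nat.not_dvd_of_pos_of_lt h0 hn

theorem natCast_eq_neg_of_add_eq {a b : ℕ} (h : a + b = p) : (a : ZMod p) = -b := by
  rw [eq_neg_iff_add_eq_zero, ← Nat.cast_add, h, ZMod.natCast_self]

@[simp]
theorem harmonicMod_zero : harmonicMod p 0 = 0 := sum_range_zero _

theorem harmonicMod_add (m n : ℕ) :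
    harmonicMod p (m + n) = harmonicMod p m + ∑ i ∈ range n, ((m + i + 1 : ℕ) : ZMod p)⁻¹ :=
  sum_range_add _ m n

theorem sum_range_inv_mul_succ (d n : ℕ) :
    ∑ i ∈ range n, ((d * (i + 1) : ℕ) : ZMod p)⁻¹ = (d : ZMod p)⁻¹ * harmonicMod p n := by
  simp only [harmonicMod, mul_sum, Nat.cast_mul, mul_inv]

/-- Reflection `j ↦ p - j` sends the `j ≡ 1 (mod d)` below `p` onto the multiples of `d`. -/
theorem sum_range_inv_mul_add_one {d m n : ℕ} (hp : p = d * m + 1) (hn : n ≤ m) :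
    ∑ k ∈ range n, ((d * k + 1 : ℕ) : ZMod p)⁻¹
      = -(d : ZMod p)⁻¹ * (harmonicMod p m - harmonicMod p (m - n)) := by
  have hreflect : ∀ k ∈ range n, ((d * (n - 1 - k) + 1 : ℕ) : ZMod p)⁻¹
      = -((d * (m - n + k + 1) : ℕ) : ZMod p)⁻¹ := by
    intro k hk
    have hk : k < n := mem_range.mp hk
    have hsum : d * (n - 1 - k) + 1 + d * (m - n + k + 1) = p := by
      rw [hp, add_right_comm, ← mul_add]
      congr 2
      omega
    rw [natCast_eq_neg_of_add_eq hsum, inv_neg]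
  have hsplit : harmonicMod p m
      = harmonicMod p (m - n) + ∑ k ∈ range n, ((m - n + k + 1 : ℕ) : ZMod p)⁻¹ := by
    rw [← harmonicMod_add, Nat.sub_add_cancel hn]
  rw [← sum_range_reflect, sum_congr rfl hreflect, sum_neg_distrib, hsplit]
  simp only [Nat.cast_mul, mul_inv, ← mul_sum]
  ring

theorem two_ne_zero_of_eq_two_mul_add_one {m : ℕ} (hp : p = 2 * m + 1) : (2 : ZMod p) ≠ 0 := by
  have := (Fact.out : p.Prime).two_le
  exact_mod_cast natCast_ne_zero_of_lt (p := p) (n := 2) two_pos (by omega)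

theorem sum_range_inv_two_mul_add_two (n : ℕ) :
    ∑ i ∈ range n, ((2 * i + 1 + 1 : ℕ) : ZMod p)⁻¹ = (2 : ZMod p)⁻¹ * harmonicMod p n := by
  have h := sum_range_inv_mul_succ (p := p) 2 n
  rwa [Nat.cast_ofNat] at h

theorem harmonicMod_two_mul (n : ℕ) :
    harmonicMod p (2 * n)
      = ∑ i ∈ range n, ((2 * i + 1 : ℕ) : ZMod p)⁻¹ + (2 : ZMod p)⁻¹ * harmonicMod p n := by
  rw [harmonicMod, sum_range_two_mul, ← sum_range_inv_two_mul_add_two]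

theorem two_mul_harmonicMod_two_mul {m n : ℕ} (hp : p = 2 * m + 1) (hn : n ≤ m) :
    2 * harmonicMod p (2 * n)
      = harmonicMod p n + harmonicMod p (m - n) - harmonicMod p m := by
  rw [harmonicMod_two_mul, sum_range_inv_mul_add_one hp hn]
  linear_combination (harmonicMod p n + harmonicMod p (m - n) - harmonicMod p m)
    * mul_inv_cancel₀ (two_ne_zero_of_eq_two_mul_add_one hp)

theorem sum_range_neg_one_pow_mul_inv {m : ℕ} (hp : p = 2 * m + 1) :
    ∑ k ∈ range (2 * m), (-1 : ZMod p) ^ k * ((k + 1 : ℕ) : ZMod p)⁻¹ = -harmonicMod p m := by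
  have heven (i : ℕ) : (-1 : ZMod p) ^ (2 * i) = 1 := (even_two_mul i).neg_one_pow
  have hodd (i : ℕ) : (-1 : ZMod p) ^ (2 * i + 1) = -1 := (odd_two_mul_add_one i).neg_one_pow
  simp only [sum_range_two_mul, heven, hodd, one_mul, neg_one_mul, sum_neg_distrib]
  rw [sum_range_inv_mul_add_one hp le_rfl, sum_range_inv_two_mul_add_two, Nat.sub_self,
    harmonicMod_zero]
  linear_combination -harmonicMod p m * mul_inv_cancel₀ (two_ne_zero_of_eq_two_mul_add_one hp)

theorem natCast_choose_sub_one {k : ℕ} (hk : k < p) :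
    (((p - 1).choose k : ℕ) : ZMod p) = (-1) ^ k := by
  -- in `∑_{j ≤ k} (-1)^j C(p, j) = (-1)^k C(p - 1, k)` only the term `j = 0` survives mod `p`
  have h := congrArg (Int.cast : ℤ → ZMod p)
    (Int.alternating_sum_range_choose_eq_choose (n := p - 1) (m := k))
  have hvanish : ∀ j ∈ range k, (((-1) ^ (j + 1) * (p.choose (j + 1) : ℤ) : ℤ) : ZMod p) = 0 := by
    intro j hj
    rw [Int.cast_mul, Int.cast_natCast, (ZMod.natCast_eq_zero_iff _ _).mpr, mul_zero]
    exact (Fact.out : p.Prime).dvd_choose_self j.succ_ne_zero (by have := mem_range.mp hj; omega)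
  rw [Nat.sub_add_cancel (Fact.out : p.Prime).one_le, sum_range_succ', Int.cast_add, Int.cast_sum,
    sum_eq_zero hvanish] at h
  push_cast [Nat.choose_zero_right] at h
  have hsq : ((-1 : ZMod p) ^ k) ^ 2 = 1 := by rw [← pow_mul, pow_mul', neg_one_sq, one_pow]
  linear_combination -(-1 : ZMod p) ^ k * h - (((p - 1).choose k : ℕ) : ZMod p) * hsq

theorem natCast_choose_succ_div_self {k : ℕ} (hk : k + 1 < p) :
    ((p.choose (k + 1) / p : ℕ) : ZMod p) = (-1) ^ k * ((k + 1 : ℕ) : ZMod p)⁻¹ := by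
  have hp := (Fact.out : p.Prime)
  have hmul : (k + 1) * (p.choose (k + 1) / p) = (p - 1).choose k := by
    have h := Nat.add_one_mul_choose_eq (p - 1) k
    rw [Nat.sub_add_cancel hp.one_le] at h
    apply Nat.eq_of_mul_eq_mul_left hp.pos
    rw [h, mul_left_comm, Nat.mul_div_cancel' (hp.dvd_choose_self k.succ_ne_zero hk), mul_comm]
  have hcast := congrArg (Nat.cast : ℕ → ZMod p) hmul
  rw [Nat.cast_mul, natCast_choose_sub_one (by omega)] at hcast
  rw [eq_mul_inv_iff_mul_eq₀ (natCast_ne_zero_of_lt k.succ_pos hk), mul_comm, hcast]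

theorem fermatQuotient_two_mul_self {m : ℕ} (hp : p = 2 * m + 1) :
    fermatQuotient 2 p * p = 2 ^ (p - 1) - 1 := by
  refine Nat.div_mul_cancel ((ZMod.natCast_eq_zero_iff _ _).mp ?_)
  rw [Nat.cast_sub Nat.one_le_two_pow, Nat.cast_pow, Nat.cast_ofNat, Nat.cast_one,
    ZMod.pow_card_sub_one_eq_one (two_ne_zero_of_eq_two_mul_add_one hp), sub_self]

theorem natCast_fermatQuotient_two {m : ℕ} (hp : p = 2 * m + 1) :
    (fermatQuotient 2 p : ℚ) = (2 ^ (p - 1) - 1 : ℚ) / p := by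
  have h := congrArg (Nat.cast : ℕ → ℚ) (fermatQuotient_two_mul_self hp)
  push_cast [Nat.one_le_two_pow] at h
  rw [← h, mul_div_cancel_right₀ _ (Nat.cast_ne_zero.mpr (Fact.out : p.Prime).ne_zero)]

theorem sum_range_choose_succ_div_self {m : ℕ} (hp : p = 2 * m + 1) :
    ∑ k ∈ range (p - 1), p.choose (k + 1) / p = 2 * fermatQuotient 2 p := by
  have hprime := (Fact.out : p.Prime)
  have hbinom : ∑ k ∈ range (p - 1), p.choose (k + 1) + 2 = 2 ^ p := by
    rw [← Nat.sum_range_choose, sum_range_succ', hp, sum_range_succ, Nat.add_sub_cancel,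
      Nat.choose_self, Nat.choose_zero_right]
  have hpow : 2 ^ p = 2 * 2 ^ (p - 1) := by
    rw [← pow_succ', Nat.sub_add_cancel hprime.one_le]
  apply Nat.eq_of_mul_eq_mul_right hprime.pos
  rw [sum_mul, sum_congr rfl fun k hk => Nat.div_mul_cancel (hprime.dvd_choose_self
    k.succ_ne_zero (by have := mem_range.mp hk; omega)), mul_assoc, fermatQuotient_two_mul_self hp]
  have := Nat.one_le_two_pow (n := p - 1)
  omega

theorem harmonicMod_eq_neg_two_mul_fermatQuotient {m : ℕ} (hp : p = 2 * m + 1) :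
    harmonicMod p m = -2 * fermatQuotient 2 p := by
  have h := congrArg (Nat.cast : ℕ → ZMod p) (sum_range_choose_succ_div_self hp)
  rw [Nat.cast_sum, sum_congr rfl fun k hk => natCast_choose_succ_div_self
    (by have := mem_range.mp hk; omega), show p - 1 = 2 * m by omega,
    sum_range_neg_one_pow_mul_inv hp] at h
  push_cast at h
  linear_combination -h

theorem sum_range_inv_three_mul_add_one {h : ℕ} (hp : p = 6 * h + 1) :
    ∑ k ∈ range h, ((3 * k + 1 : ℕ) : ZMod p)⁻¹ = (3 : ZMod p)⁻¹ * harmonicMod p (3 * h) := by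
  have hthirds := sum_range_inv_mul_add_one (p := p) (d := 3) (m := 2 * h) (n := h)
    (by omega) (by omega)
  have hhalves := two_mul_harmonicMod_two_mul (p := p) (m := 3 * h) (n := h) (by omega) (by omega)
  rw [show 2 * h - h = h by omega] at hthirds
  rw [show 3 * h - h = 2 * h by omega] at hhalves
  rw [hthirds, Nat.cast_ofNat]
  linear_combination -(3 : ZMod p)⁻¹ * hhalves

theorem sum_range_succ_inv_three_mul_add_one {h : ℕ} (hp : p = 6 * h + 1) :
    ∑ k ∈ range (h + 1), ((3 * k + 1 : ℕ) : ZMod p)⁻¹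
      = -(2 / 3) * (fermatQuotient 2 p : ZMod p) + 2 := by
  have hlast : ((3 * h + 1 : ℕ) : ZMod p) * 2 = 1 := by
    have h := congrArg (Nat.cast : ℕ → ZMod p) (show (3 * h + 1) * 2 = p + 1 by omega)
    rwa [Nat.cast_add, ZMod.natCast_self, zero_add, Nat.cast_one, Nat.cast_mul,
      Nat.cast_ofNat] at h
  rw [sum_range_succ, sum_range_inv_three_mul_add_one hp, inv_eq_of_mul_eq_one_right hlast,
    harmonicMod_eq_neg_two_mul_fermatQuotient (m := 3 * h) (by omega)]
  ring

end HarmonicMod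

theorem Rat.den_intCast_div_natCast_dvd (a : ℤ) (n : ℕ) : ((a : ℚ) / n).den ∣ n := by
  have h := Rat.den_dvd a n
  rw [Rat.divInt_eq_div, Int.cast_natCast] at h
  exact_mod_cast h

section PIntegralRat

/-! `(Rat.padicValuation p).integer` is the ring of rationals whose denominator is prime to `p`;
on it, the cast `ℚ → ZMod p` is reduction modulo `p`. -/

variable {p : ℕ} [Fact p.Prime]

theorem natCast_den_ne_zero_of_mem {x : ℚ} (hx : x ∈ (Rat.padicValuation p).integer) :
    ((x.den : ℕ) : ZMod p) ≠ 0 := by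
  rw [Ne, ZMod.natCast_eq_zero_iff]
  exact Rat.padicValuation_le_one_iff.mp hx

theorem intCast_div_natCast_mem {a : ℤ} {n : ℕ} (hn : (n : ZMod p) ≠ 0) :
    (a / n : ℚ) ∈ (Rat.padicValuation p).integer := by
  rw [Valuation.mem_integer_iff, Rat.padicValuation_le_one_iff]
  intro hdvd
  exact hn ((ZMod.natCast_eq_zero_iff _ _).mpr (hdvd.trans (Rat.den_intCast_div_natCast_dvd a n)))

theorem cast_intCast_div_natCast {a : ℤ} {n : ℕ} (hn : (n : ZMod p) ≠ 0) :
    ((a / n : ℚ) : ZMod p) = a / n := by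
  have hnQ : (n : ℚ) ≠ 0 := Nat.cast_ne_zero.mpr (by rintro rfl; exact hn Nat.cast_zero)
  have h := Rat.cast_mul_of_ne_zero (α := ZMod p) (natCast_den_ne_zero_of_mem
    (intCast_div_natCast_mem (a := a) hn)) (by simp : (((n : ℚ).den : ℕ) : ZMod p) ≠ 0)
  rw [div_mul_cancel₀ _ hnQ, Rat.cast_intCast, Rat.cast_natCast] at h
  rw [eq_div_iff hn, h]

theorem cast_sum_of_mem {ι : Type*} (s : Finset ι) {f : ι → ℚ}
    (hf : ∀ i ∈ s, f i ∈ (Rat.padicValuation p).integer) :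
    ((∑ i ∈ s, f i : ℚ) : ZMod p) = ∑ i ∈ s, (f i : ZMod p) := by
  classical
  induction s using Finset.induction_on with
  | empty => simp
  | insert a s ha ih =>
    have hs : ∀ i ∈ s, f i ∈ (Rat.padicValuation p).integer :=
      fun i hi => hf i (mem_insert_of_mem hi)
    rw [sum_insert ha, sum_insert ha, Rat.cast_add_of_ne_zero
      (natCast_den_ne_zero_of_mem (hf a (mem_insert_self a s)))
      (natCast_den_ne_zero_of_mem (sum_mem hs)), ih hs]

theorem ratCongr_of_cast_eq {x y : ℚ} (hx : x ∈ (Rat.padicValuation p).integer)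
    (hy : y ∈ (Rat.padicValuation p).integer) (h : (x : ZMod p) = (y : ZMod p)) :
    ratCongr p x y := by
  have hden := natCast_den_ne_zero_of_mem (sub_mem hx hy)
  obtain ⟨a, ha⟩ : (p : ℤ) ∣ (x - y).num := by
    rw [← ZMod.intCast_zmod_eq_zero_iff_dvd]
    have hcast : ((x - y : ℚ) : ZMod p) = 0 := by
      rw [Rat.cast_sub_of_ne_zero (natCast_den_ne_zero_of_mem hx)
        (natCast_den_ne_zero_of_mem hy), h, sub_self]
    rw [Rat.cast_def, div_eq_zero_iff] at hcast
    exact hcast.resolve_right hden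
  refine ⟨a / (x - y).den, fun hdvd => hden ?_, ?_⟩
  · rw [ZMod.natCast_eq_zero_iff]
    exact Int.natCast_dvd_natCast.mp (hdvd.trans
      (Int.natCast_dvd_natCast.mpr (Rat.den_intCast_div_natCast_dvd a _)))
  · calc x - y = (x - y).num / (x - y).den := (Rat.num_div_den _).symm
      _ = p * (a / (x - y).den) := by rw [ha]; push_cast; ring

end PIntegralRat

theorem stmt8 (p : ℕ) (hp : p.Prime) (h1 : p % 6 = 1) :
    ratCongr p (∑ k ∈ Finset.range ((p - 1) / 6 + 1), (1 : ℚ) / (3 * k + 1))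
      (-(2 / 3) * ((2 ^ (p - 1) - 1 : ℚ) / p) + 2) := by
  have : Fact p.Prime := ⟨hp⟩
  have hp2 := hp.two_le
  obtain ⟨h, hp6⟩ : ∃ h, p = 6 * h + 1 := ⟨p / 6, by omega⟩
  have hunit (k : ℕ) (hk : k ∈ range (h + 1)) : ((3 * k + 1 : ℕ) : ZMod p) ≠ 0 :=
    natCast_ne_zero_of_lt (3 * k).succ_pos (by have := mem_range.mp hk; omega)
  have h3 : ((3 : ℕ) : ZMod p) ≠ 0 := natCast_ne_zero_of_lt three_pos (by omega)
  have hlhs : ∀ k ∈ range (h + 1),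
      (1 : ℚ) / (3 * k + 1) = ((1 : ℤ) : ℚ) / ((3 * k + 1 : ℕ) : ℚ) := fun k _ => by
    push_cast
    rfl
  have hrhs : -(2 / 3) * ((2 ^ (p - 1) - 1 : ℚ) / p) + 2
      = ((6 - 2 * fermatQuotient 2 p : ℤ) : ℚ) / ((3 : ℕ) : ℚ) := by
    rw [← natCast_fermatQuotient_two (m := 3 * h) (by omega)]
    push_cast
    ring
  rw [show (p - 1) / 6 = h by omega, sum_congr rfl hlhs, hrhs]
  refine ratCongr_of_cast_eq (sum_mem fun k hk => intCast_div_natCast_mem (hunit k hk))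
    (intCast_div_natCast_mem h3) ?_
  rw [cast_sum_of_mem _ fun k hk => intCast_div_natCast_mem (hunit k hk),
    sum_congr rfl fun k hk => cast_intCast_div_natCast (hunit k hk), cast_intCast_div_natCast h3]
  simp only [Int.cast_one, one_div]
  rw [sum_range_succ_inv_three_mul_add_one hp6]
  push_cast at h3 ⊢
  field_simp
  ring
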